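/- Let q be an odd prime power, χ the quadratic character of 𝔽_q, and S ⊆ 𝔽_q a finite subset. Then ∑_{i∈𝔽_q} (∑_{j∈S} χ(i+j))² = q·|S| − |S|². -/

import Mathlib

open scoped Classical

/-- The quadratic character of a finite field: `0` at `0`, `1` on nonzero
squares, `-1` on nonsquares. -/
noncomputable def qchar {F : Type*} [Field F] (x : F) : ℤ :=
  if x = 0 then 0 else if IsSquare x then 1 else -1

lemma qchar_eq {F : Type*} [Field F] [Fintype F] (x : F) :
    qchar x = quadraticChar F x := by
  rw [quadraticChar_apply, quadraticCharFun, qchar]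
  split_ifs <;> rfl

lemma qchar_aux {F : Type*} [Field F] [Fintype F] (hF : ringChar F ≠ 2)
    {b : F} (hb : b ≠ 0) :
    ∑ a : F, quadraticChar F a * quadraticChar F (a + b) = -1 := by
  have h0 : (quadraticChar F) (0 : F) * quadraticChar F (0 + b) = 0 := by simp
  rw [← Finset.add_sum_erase _ _ (Finset.mem_univ (0 : F)), h0, zero_add]
  have hstep : ∀ a ∈ Finset.univ.erase (0 : F),
      quadraticChar F a * quadraticChar F (a + b)
        = quadraticChar F (1 + b * a⁻¹) := by
    intro a ha
    have ha0 : a ≠ 0 := Finset.ne_of_mem_erase ha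
    have : a + b = a * (1 + b * a⁻¹) := by field_simp
    rw [this, map_mul, ← mul_assoc, ← sq, quadraticChar_sq_one ha0, one_mul]
  rw [Finset.sum_congr rfl hstep]
  have hbij : ∑ a ∈ Finset.univ.erase (0 : F), quadraticChar F (1 + b * a⁻¹)
      = ∑ x ∈ Finset.univ.erase (1 : F), quadraticChar F x := by
    apply Finset.sum_nbij' (i := fun a => 1 + b * a⁻¹) (j := fun x => b * (x - 1)⁻¹)
    · intro a ha
      have ha0 : a ≠ 0 := Finset.ne_of_mem_erase ha
      simp only [Finset.mem_erase, Finset.mem_univ, and_true]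
      intro h
      have : b * a⁻¹ = 0 := by linear_combination h
      rcases mul_eq_zero.mp this with h' | h'
      · exact hb h'
      · exact ha0 (inv_eq_zero.mp h')
    · intro x hx
      have hx1 : x ≠ 1 := Finset.ne_of_mem_erase hx
      simp only [Finset.mem_erase, Finset.mem_univ, and_true]
      exact mul_ne_zero hb (inv_ne_zero (sub_ne_zero.mpr hx1))
    · intro a ha
      have ha0 : a ≠ 0 := Finset.ne_of_mem_erase ha
      field_simp
      simp [hb]
    · intro x hx
      have hx1 : x ≠ 1 := Finset.ne_of_mem_erase hx
      have : x - 1 ≠ 0 := sub_ne_zero.mpr hx1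
      field_simp
      ring
    · intro a ha; rfl
  rw [hbij]
  have h := quadraticChar_sum_zero hF
  rw [← Finset.add_sum_erase _ _ (Finset.mem_univ (1 : F))] at h
  simp only [map_one] at h
  linarith

theorem legendre_subset_sum_of_squares {F : Type*} [Field F] [Fintype F]
    (hq : Odd (Fintype.card F)) (S : Finset F) :
    ∑ i : F, (∑ j ∈ S, qchar (i + j)) ^ 2
      = (Fintype.card F : ℤ) * S.card - (S.card : ℤ) ^ 2 := by
  have hF : ringChar F ≠ 2 := by
    intro h
    have h2 := FiniteField.even_card_of_char_two h
    have h1 := Nat.odd_iff.mp hq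
    omega
  have key : ∀ j k : F, ∑ i : F, quadraticChar F (i + j) * quadraticChar F (i + k)
      = if j = k then (Fintype.card F : ℤ) - 1 else -1 := by
    intro j k
    have hbij : ∑ i : F, quadraticChar F (i + j) * quadraticChar F (i + k)
        = ∑ i : F, quadraticChar F i * quadraticChar F (i + (k - j)) := by
      apply Fintype.sum_equiv (Equiv.addRight j)
      intro i
      simp only [Equiv.coe_addRight]
      ring_nf
    rw [hbij]
    by_cases hjk : j = k
    · subst hjk
      simp only [sub_self, add_zero, if_pos rfl]
      rw [← Finset.add_sum_erase _ _ (Finset.mem_univ (0 : F))]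
      have h0 : (quadraticChar F) (0 : F) * quadraticChar F (0 : F) = 0 := by simp
      rw [h0, zero_add]
      have : ∀ a ∈ Finset.univ.erase (0 : F),
          quadraticChar F a * quadraticChar F a = 1 := by
        intro a ha
        have := quadraticChar_sq_one (F := F) (Finset.ne_of_mem_erase ha)
        rwa [sq] at this
      rw [Finset.sum_congr rfl this, Finset.sum_const,
        Finset.card_erase_of_mem (Finset.mem_univ _), Finset.card_univ]
      have hpos : 1 ≤ Fintype.card F := Fintype.card_pos
      rw [nsmul_eq_mul, mul_one]
      push_cast [Nat.cast_sub hpos]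
      ring

    · rw [if_neg hjk]
      exact qchar_aux hF (sub_ne_zero.mpr (Ne.symm hjk))
  simp only [qchar_eq]
  have expand : ∀ i : F, (∑ j ∈ S, quadraticChar F (i + j)) ^ 2
      = ∑ j ∈ S, ∑ k ∈ S, quadraticChar F (i + j) * quadraticChar F (i + k) := by
    intro i
    rw [sq, Finset.sum_mul_sum]
  rw [Finset.sum_congr rfl fun i _ => expand i, Finset.sum_comm]
  have hswap : ∀ j ∈ S, ∑ i : F, ∑ k ∈ S, quadraticChar F (i + j) * quadraticChar F (i + k)
      = ∑ k ∈ S, (if j = k then (Fintype.card F : ℤ) - 1 else -1) := by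
    intro j _
    rw [Finset.sum_comm]
    exact Finset.sum_congr rfl fun k _ => key j k
  rw [Finset.sum_congr rfl hswap]
  have hinner : ∀ j ∈ S, ∑ k ∈ S, (if j = k then (Fintype.card F : ℤ) - 1 else -1)
      = (Fintype.card F : ℤ) - S.card := by
    intro j hj
    have hsplit : ∀ k : F, (if j = k then (Fintype.card F : ℤ) - 1 else -1)
        = (if j = k then (Fintype.card F : ℤ) else 0) - 1 := by
      intro k; split_ifs <;> ring
    simp only [hsplit, Finset.sum_sub_distrib, Finset.sum_ite_eq, hj, if_pos,
      Finset.sum_const, nsmul_eq_mul, mul_one]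
  rw [Finset.sum_congr rfl hinner, Finset.sum_const, nsmul_eq_mul]
  ring
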